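/- In a symmetric IID market where each school has a single seat (C = 1) and the ratio of students to schools is ρ = n/(n+k) < 1 for positive integers n, k, the unique (η^IID, V^pois)-stable matching M^IID satisfies AverageRank(M^IID) ≤ ((n+k)/n)·log((n+k)/k). -/

import Mathlib

open MeasureTheory Filter
open scoped Classical ENNReal

noncomputable section

/-- A student type: a complete (linear) order on `Option H` (`none` is the outside option `∅`),
together with a priority score in `[0,1]` at each school. -/
abbrev Student (H : Type*) := LinearOrder (Option H) × (H → unitInterval)

instance (H : Type*) : MeasurableSpace (LinearOrder (Option H)) := ⊤
instance (H : Type*) : TopologicalSpace (LinearOrder (Option H)) := ⊥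

/-- `Prefers θ a b` : student `θ` strictly prefers option `a` to option `b`. -/
def Prefers {H : Type*} (θ : Student H) (a b : Option H) : Prop := θ.1.lt b a

/-- Priority of `θ` at option `h` (junk value `1` at the outside option). -/
def priOf {H : Type*} (θ : Student H) : Option H → unitInterval := fun o => o.elim 1 θ.2

abbrev MatchingFun (H : Type*) := Student H → Option H → ℝ
abbrev InterestFun (H : Type*) := H → unitInterval → ℝ
abbrev AdmissionsFun (H : Type*) := Option H → unitInterval → ℝ

section Defs
variable {H : Type*} [Fintype H]

/-- `M` maps each student to a probability distribution over `Option H`. -/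
def IsMatchingFun (M : MatchingFun H) : Prop :=
  ∀ θ : Student H, (∀ h, 0 ≤ M θ h) ∧ ∑ h : Option H, M θ h = 1

/-- Interest functions are componentwise weakly decreasing and nonnegative. -/
def IsInterestFun (I : InterestFun H) : Prop :=
  ∀ h, Antitone (I h) ∧ ∀ p, 0 ≤ I h p

/-- Admissions functions are componentwise weakly increasing with values in `[0,1]`,
and everyone is always admitted to the outside option. -/
def IsAdmissionsFun (A : AdmissionsFun H) : Prop :=
  (∀ h, Monotone (A h) ∧ ∀ p, A h p ∈ Set.Icc (0:ℝ) 1) ∧ ∀ p, A none p = 1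

/-- The interest function `𝓘(M)` of a matching `M`. -/
def interestOf (η : Measure (Student H)) (M : MatchingFun H) : InterestFun H :=
  fun h p => ∫ θ, (if p ≤ θ.2 h then (1:ℝ) else 0) *
    (1 - ∑ h' ∈ Finset.univ.filter (fun h' : Option H => Prefers θ h' (some h)), M θ h') ∂η

/-- The admissions function `𝓐(I)` of an interest function `I`, given a vacancy function `V`
and capacities `C`. -/
def admissionsOf (V : ℝ → ℕ → ℝ) (C : H → ℕ) (I : InterestFun H) : AdmissionsFun H :=
  fun h p => h.elim 1 fun h0 => V (I h0 p) (C h0)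

/-- The matching `𝓜(A)` of an admissions function `A`. -/
def matchingOf (A : AdmissionsFun H) : MatchingFun H := fun θ h =>
  A h (priOf θ h) *
    ∏ h' ∈ Finset.univ.filter (fun h' : Option H => Prefers θ h' h), (1 - A h' (priOf θ h'))

/-- A matching `M` is `(η, V)`-stable if `M = 𝓜(𝓐(𝓘(M)))`. -/
def StableMatching (η : Measure (Student H)) (V : ℝ → ℕ → ℝ) (C : H → ℕ)
    (M : MatchingFun H) : Prop :=
  IsMatchingFun M ∧ M = matchingOf (admissionsOf V C (interestOf η M))

/-- An interest function `I` is `(η, V)`-stable if `I = 𝓘(𝓜(𝓐(I)))`. -/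
def StableInterest (η : Measure (Student H)) (V : ℝ → ℕ → ℝ) (C : H → ℕ)
    (I : InterestFun H) : Prop :=
  IsInterestFun I ∧ I = interestOf η (matchingOf (admissionsOf V C I))

/-- An admissions function `A` is `(η, V)`-stable if `A = 𝓐(𝓘(𝓜(A)))`. -/
def StableAdmissions (η : Measure (Student H)) (V : ℝ → ℕ → ℝ) (C : H → ℕ)
    (A : AdmissionsFun H) : Prop :=
  IsAdmissionsFun A ∧ A = admissionsOf V C (interestOf η (matchingOf A))

/-- An outcome `(M, I, A)` is `(η, V)`-stable. -/
def StableOutcome (η : Measure (Student H)) (V : ℝ → ℕ → ℝ) (C : H → ℕ)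
    (M : MatchingFun H) (I : InterestFun H) (A : AdmissionsFun H) : Prop :=
  IsMatchingFun M ∧ IsInterestFun I ∧ IsAdmissionsFun A ∧
  M = matchingOf A ∧ I = interestOf η M ∧ A = admissionsOf V C I

/-- The deterministic vacancy function `V^det(λ, C) = 1(λ < C)`. -/
def Vdet : ℝ → ℕ → ℝ := fun lam C => if lam < (C : ℝ) then 1 else 0

/-- The Poisson vacancy function `V^pois(λ, C) = Σ_{k<C} e^{-λ} λ^k / k!`. -/
def Vpois : ℝ → ℕ → ℝ := fun lam C =>
  ∑ k ∈ Finset.range C, Real.exp (-lam) * lam ^ k / (Nat.factorial k : ℝ)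

/-- A measure `η` on student types has strict priorities. -/
def StrictPriorities (η : Measure (Student H)) : Prop :=
  ∀ (h : H) (p : unitInterval), η {θ : Student H | Prefers θ (some h) none ∧ θ.2 h = p} = 0

end Defs

section Symmetric
variable {H : Type*} [Fintype H]

/-- The order `r` on `Option H` restricts to the order `s` on `H`. -/
def RestrictsTo (r : LinearOrder (Option H)) (s : LinearOrder H) : Prop :=
  ∀ a b : H, r.lt (some a) (some b) ↔ s.lt a b

/-- Priorities of a student, as a vector of reals. -/
def priMap : Student H → (H → ℝ) := fun θ h => (θ.2 h : ℝ)

/-- The uniform measure on `[0,1]^H`. -/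
def uniformPriors (H : Type*) [Fintype H] : Measure (H → ℝ) :=
  Measure.pi fun _ => volume.restrict (Set.Icc (0:ℝ) 1)

/-- The uniform measure on the diagonal `{p : p_h = p_{h'} for all h, h'}` of `[0,1]^H`. -/
def uniformDiag (H : Type*) [Fintype H] : Measure (H → ℝ) :=
  Measure.map (fun x : ℝ => Function.const H x) (volume.restrict (Set.Icc (0:ℝ) 1))

/-- `η` is a symmetric IID measure: (i) the restriction of the preference order to `H` is
uniformly distributed (all restrictions are equally likely), and (ii) conditionally on each
complete preference order, the priority vector is uniformly distributed on `[0,1]^H`. -/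
def IsSymmetricIID (η : Measure (Student H)) : Prop :=
  (∀ s t : LinearOrder H,
    η {θ : Student H | RestrictsTo θ.1 s} = η {θ : Student H | RestrictsTo θ.1 t}) ∧
  (∀ r : LinearOrder (Option H), ∃ c : ℝ≥0∞,
    Measure.map priMap (η.restrict {θ : Student H | θ.1 = r}) = c • uniformPriors H)

/-- `η` is a symmetric RSD measure: as in the IID case, but conditionally on each preference
order the priority vector is uniformly distributed on the diagonal of `[0,1]^H`. -/
def IsSymmetricRSD (η : Measure (Student H)) : Prop :=
  (∀ s t : LinearOrder H,
    η {θ : Student H | RestrictsTo θ.1 s} = η {θ : Student H | RestrictsTo θ.1 t}) ∧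
  (∀ r : LinearOrder (Option H), ∃ c : ℝ≥0∞,
    Measure.map priMap (η.restrict {θ : Student H | θ.1 = r}) = c • uniformDiag H)

/-- The rank `R_h(θ)`: the number of options weakly preferred to `h` by `θ`. -/
def rankOf (θ : Student H) (h : H) : ℕ :=
  (Finset.univ.filter fun h' : Option H => Prefers θ h' (some h) ∨ h' = some h).card

/-- The average rank of matched students under matching `M`. -/
def averageRank (η : Measure (Student H)) (M : MatchingFun H) : ℝ :=
  (∫ θ, ∑ h : H, M θ (some h) * (rankOf θ h : ℝ) ∂η) /
  (∫ θ, ∑ h : H, M θ (some h) ∂η)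

/-- The number of schools listed (preferred to the outside option) by `θ`. -/
def listCount (θ : Student H) : ℕ :=
  (Finset.univ.filter fun h : H => Prefers θ (some h) none).card

/-- `Enrollment(λ, C) = ∫₀^λ V^pois(x, C) dx`. -/
def enrollment (lam : ℝ) (C : ℕ) : ℝ := ∫ x in (0:ℝ)..lam, Vpois x C

/-- `Λ(ρ, C)`: the smallest nonnegative solution `λ` of `Enrollment(λ, C) = ρ`. -/
def lambdaOf (ρ : ℝ) (C : ℕ) : ℝ := sInf {lam : ℝ | 0 ≤ lam ∧ enrollment lam C = ρ}

end Symmetric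

/-!
In a stable matching with unit capacities and Poisson vacancies, a student with priority `p` at
school `h` is admitted with probability `exp (-(1 - p) λ_h)`, where the demand `λ_h` is the mass
of students who list `h` and are rejected by every school they rank above it. Under a symmetric
IID measure the priorities are independent and uniform on each fiber of preference orders, so
`λ_h` is an explicit sum over orders and `h` admits its applicants at the mean rate
`q(λ_h) = (1 - e^{-λ_h}) / λ_h`. As `h` is equally likely to sit at each position of a uniform
order, the school with the least rate `q_*` bounds every demand: `λ_h q_* ≤ ρ`. For that school
this gives `λ ≤ ℓ := -log (1 - ρ)`, hence `q_* ≥ ρ / ℓ`, hence `λ_h ≤ ℓ` and `q(λ_h) ≥ ρ / ℓ`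
for every `h`. The total rank of matched students is at most `∑ λ_h`, while their mass is
`∑ q(λ_h) λ_h ≥ (ρ / ℓ) ∑ λ_h`.
-/

open MeasureTheory Set

instance LinearOrder.finite {α : Type*} [Finite α] : Finite (LinearOrder α) :=
  Finite.of_injective (fun L : LinearOrder α => L.le) fun _ _ h => LinearOrder.ext fun a b => by
    simp only at h; rw [h]

instance LinearOrder.fintype {α : Type*} [Finite α] : Fintype (LinearOrder α) :=
  Fintype.ofFinite _

namespace LinearOrder

variable {α β : Type*}

abbrev comap (f : α → β) (hf : Function.Injective f) (L : LinearOrder β) : LinearOrder α :=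
  letI := L; LinearOrder.lift' f hf

lemma comap_lt (f : α → β) (hf : Function.Injective f) (L : LinearOrder β) (a b : α) :
    (comap f hf L).lt a b ↔ L.lt (f a) (f b) := by
  rw [@lt_iff_le_not_ge α (comap f hf L).toPreorder, @lt_iff_le_not_ge β L.toPreorder]
  rfl

end LinearOrder

section Orders

variable {H : Type*}

lemma restrictsTo_iff (r : LinearOrder (Option H)) (s : LinearOrder H) :
    RestrictsTo r s ↔ r.comap some (Option.some_injective H) = s := by
  refine ⟨fun h => LinearOrder.ext_lt fun a b => ?_, ?_⟩
  · rw [LinearOrder.comap_lt, h]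
  · rintro rfl a b
    exact (LinearOrder.comap_lt _ _ _ a b).symm

variable [Fintype H]

def aboveCount (s : LinearOrder H) (h : H) : ℕ :=
  (Finset.univ.filter fun g => s.lt h g).card

lemma aboveCount_lt_card (s : LinearOrder H) (h : H) : aboveCount s h < Fintype.card H :=
  Finset.card_lt_univ_of_notMem (x := h) (by simp)

lemma aboveCount_lt_aboveCount {s : LinearOrder H} {a b : H} (hab : s.lt a b) :
    aboveCount s b < aboveCount s a := by
  let _ := s
  refine Finset.card_lt_card ⟨fun g hg => ?_, fun hsub => ?_⟩
  · simp only [Finset.mem_filter, Finset.mem_univ, true_and] at hg ⊢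
    exact hab.trans hg
  · have := hsub (Finset.mem_filter.2 ⟨Finset.mem_univ _, hab⟩)
    exact lt_irrefl b (Finset.mem_filter.1 this).2

lemma aboveCount_injective (s : LinearOrder H) : Function.Injective (aboveCount s) := by
  intro a b hab
  let _ := s
  rcases lt_trichotomy a b with h | h | h
  · exact absurd hab (aboveCount_lt_aboveCount h).ne'
  · exact h
  · exact absurd hab (aboveCount_lt_aboveCount h).ne

lemma image_aboveCount (s : LinearOrder H) :
    Finset.univ.image (aboveCount s) = Finset.range (Fintype.card H) :=
  Finset.eq_of_subset_of_card_le
    (fun i hi => by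
      obtain ⟨h, -, rfl⟩ := Finset.mem_image.1 hi
      exact Finset.mem_range.2 (aboveCount_lt_card s h))
    (by rw [Finset.card_image_of_injective _ (aboveCount_injective s)]; simp)

lemma sum_pow_aboveCount (s : LinearOrder H) (x : ℝ) :
    ∑ h, x ^ aboveCount s h = ∑ i ∈ Finset.range (Fintype.card H), x ^ i := by
  rw [← image_aboveCount s, Finset.sum_image fun a _ b _ hab => aboveCount_injective s hab]

lemma aboveCount_comap (τ : Equiv.Perm H) (s : LinearOrder H) (h : H) :
    aboveCount (s.comap τ τ.injective) h = aboveCount s (τ h) := by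
  refine Finset.card_equiv τ fun g => ?_
  simp [LinearOrder.comap_lt]

lemma sum_pow_aboveCount_eq (x : ℝ) (h h' : H) :
    ∑ s : LinearOrder H, x ^ aboveCount s h = ∑ s : LinearOrder H, x ^ aboveCount s h' := by
  set τ := Equiv.swap h h'
  have hττ : ∀ a, τ (τ a) = a := Equiv.swap_apply_self h h'
  have hτ : Function.Involutive fun s : LinearOrder H => s.comap τ τ.injective := fun s =>
    LinearOrder.ext_lt fun a b => by
      change (LinearOrder.comap _ _ _).lt a b ↔ s.lt a b
      rw [LinearOrder.comap_lt, LinearOrder.comap_lt, hττ, hττ]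
  have hτh' : τ h' = h := Equiv.swap_apply_right h h'
  refine Fintype.sum_bijective _ hτ.bijective _ _ fun s => ?_
  rw [aboveCount_comap, hτh']

/-- In a uniformly random order, `h` is equally likely to occupy each position. -/
lemma card_mul_sum_pow_aboveCount (x : ℝ) (h : H) :
    Fintype.card H * ∑ s : LinearOrder H, x ^ aboveCount s h =
      Fintype.card (LinearOrder H) * ∑ i ∈ Finset.range (Fintype.card H), x ^ i := by
  calc (Fintype.card H : ℝ) * ∑ s : LinearOrder H, x ^ aboveCount s h
      = ∑ h' : H, ∑ s : LinearOrder H, x ^ aboveCount s h' := by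
        simp [sum_pow_aboveCount_eq x _ h]
    _ = _ := by rw [Finset.sum_comm]; simp [sum_pow_aboveCount]

end Orders

section MatchingAlgebra

variable {H : Type*} [Fintype H]

/-- The probability that `θ` is rejected by every option it prefers to `o`. -/
def rejectedAbove (A : AdmissionsFun H) (θ : Student H) (o : Option H) : ℝ :=
  ∏ o' ∈ Finset.univ.filter (fun o' => Prefers θ o' o), (1 - A o' (priOf θ o'))

lemma mem_filter_prefers {θ : Student H} {o o' : Option H} :
    o' ∈ Finset.univ.filter (fun o' => Prefers θ o' o) ↔ θ.1.lt o o' :=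
  Finset.mem_filter.trans (and_iff_right (Finset.mem_univ _))

lemma matchingOf_apply (A : AdmissionsFun H) (θ : Student H) (o : Option H) :
    matchingOf A θ o = A o (priOf θ o) * rejectedAbove A θ o := rfl

lemma sum_matchingOf_of_upperClosed (A : AdmissionsFun H) (θ : Student H) (U : Finset (Option H))
    (hU : ∀ o ∈ U, ∀ o', Prefers θ o' o → o' ∈ U) :
    ∑ o ∈ U, matchingOf A θ o = 1 - ∏ o ∈ U, (1 - A o (priOf θ o)) := by
  -- telescoping along the reversed preference order
  let _ : LinearOrder (Option H) := @OrderDual.instLinearOrder _ θ.1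
  rw [Finset.prod_one_sub_ordered, sub_sub_cancel]
  refine Finset.sum_congr rfl fun o ho => ?_
  rw [matchingOf_apply, rejectedAbove]
  congr 2
  ext o'
  simp only [Finset.mem_filter, Finset.mem_univ, true_and]
  exact ⟨fun h => ⟨hU o ho o' h, h⟩, fun h => h.2⟩

lemma rejectedAbove_eq (A : AdmissionsFun H) (θ : Student H) (o : Option H) :
    rejectedAbove A θ o =
      1 - ∑ o' ∈ Finset.univ.filter (fun o' => Prefers θ o' o), matchingOf A θ o' := by
  rw [sum_matchingOf_of_upperClosed, sub_sub_cancel, rejectedAbove]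
  intro o₁ ho₁ o₂ h₂
  exact Finset.mem_filter.2 ⟨Finset.mem_univ _,
    @lt_trans _ θ.1.toPreorder _ _ _ (Finset.mem_filter.1 ho₁).2 h₂⟩

lemma sum_matchingOf (A : AdmissionsFun H) (hA : ∀ p, A none p = 1) (θ : Student H) :
    ∑ o, matchingOf A θ o = 1 := by
  rw [sum_matchingOf_of_upperClosed A θ _ fun _ _ _ _ => Finset.mem_univ _,
    Finset.prod_eq_zero (Finset.mem_univ none) (by simp [priOf, hA]), sub_zero]

lemma sum_rejectedAbove (A : AdmissionsFun H) (hA : ∀ p, A none p = 1) (θ : Student H) :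
    ∑ o, rejectedAbove A θ o = ∑ o, matchingOf A θ o *
      (Finset.univ.filter fun o' => Prefers θ o' o ∨ o' = o).card := by
  have hweak : ∀ o, rejectedAbove A θ o =
      ∑ o' ∈ Finset.univ.filter (fun o' => ¬ Prefers θ o' o), matchingOf A θ o' := by
    intro o
    rw [rejectedAbove_eq, ← sum_matchingOf A hA θ, ← Finset.sum_filter_add_sum_filter_not
      Finset.univ (fun o' => Prefers θ o' o), add_sub_cancel_left]
  simp only [hweak, Finset.sum_filter]
  rw [Finset.sum_comm]
  refine Finset.sum_congr rfl fun o _ => ?_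
  rw [← Finset.sum_filter, Finset.sum_const, nsmul_eq_mul, mul_comm]
  congr 3
  ext o'
  rw [Finset.mem_filter, Finset.mem_filter]
  let _ := θ.1
  exact and_congr_right fun _ => not_lt.trans (le_iff_lt_or_eq.trans (or_congr_right eq_comm))

/-- `∑ o', rejectedAbove A θ o'` counts each option `o` with weight `matchingOf A θ o` once for
every option ranked weakly above it; dropping the outside option leaves the ranks. -/
lemma sum_matchingOf_mul_rankOf_le (A : AdmissionsFun H) (hA : ∀ p, A none p = 1)
    (hA1 : ∀ o p, A o p ≤ 1) (θ : Student H) :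
    ∑ h : H, matchingOf A θ (some h) * rankOf θ h ≤ ∑ h : H, rejectedAbove A θ (some h) := by
  have hcount := sum_rejectedAbove A hA θ
  rw [Fintype.sum_option, Fintype.sum_option] at hcount
  have hnone : matchingOf A θ none = rejectedAbove A θ none := by
    rw [matchingOf_apply, priOf, Option.elim, hA, one_mul]
  have hpos : 1 ≤ (Finset.univ.filter fun o' => Prefers θ o' none ∨ o' = none).card :=
    Finset.card_pos.2 ⟨none, by simp⟩
  have hrej : 0 ≤ rejectedAbove A θ none :=
    Finset.prod_nonneg fun o _ => sub_nonneg.2 (hA1 o _)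
  rw [hnone] at hcount
  simp only [rankOf]
  linarith [mul_le_mul_of_nonneg_left (Nat.one_le_cast.2 hpos : (1:ℝ) ≤ _) hrej]

end MatchingAlgebra

section Measurability

variable {α β : Type*} [MeasurableSpace α] [LinearOrder β] [TopologicalSpace β]
  [OrderClosedTopology β] [MeasurableSpace β] [BorelSpace β]

lemma integrable_of_mem_Icc {μ : Measure α} [IsFiniteMeasure μ] {f : α → ℝ}
    (hf : AEStronglyMeasurable f μ) (h01 : ∀ a, f a ∈ Icc (0:ℝ) 1) : Integrable f μ :=
  .of_bound hf 1 (ae_of_all _ fun a => by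
    rw [Real.norm_eq_abs, abs_of_nonneg (h01 a).1]; exact (h01 a).2)

/-- No measurability of `G` is assumed: the integrands that are a.e.-measurable form an upper set
of parameters, on which the integral is antitone; elsewhere it is `0`. -/
lemma measurable_integral_ite_le_mul (μ : Measure α) [IsFiniteMeasure μ] {X : α → β}
    (hX : Measurable X) {G : α → ℝ} (hG : ∀ a, G a ∈ Icc 0 1) :
    Measurable fun p => ∫ a, (if p ≤ X a then (1:ℝ) else 0) * G a ∂μ := by
  set F : β → α → ℝ := fun p a => (if p ≤ X a then (1:ℝ) else 0) * G a
  have hF : ∀ p a, F p a ∈ Icc 0 1 := fun p a => by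
    by_cases h : p ≤ X a <;> simp [F, h, hG a]
  have hmeas : ∀ q, Measurable fun a => if q ≤ X a then (1:ℝ) else 0 := fun q =>
    Measurable.ite (hX measurableSet_Ici) measurable_const measurable_const
  set S := {p | AEStronglyMeasurable (F p) μ}
  have hS : IsUpperSet S := fun p q hpq hp => by
    have : F q = fun a => (if q ≤ X a then (1:ℝ) else 0) * F p a := funext fun a => by
      by_cases h : q ≤ X a
      · simp [F, h, hpq.trans h]
      · simp [F, h]
    change AEStronglyMeasurable (F q) μ
    rw [this]
    exact (hmeas q).aestronglyMeasurable.mul hp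
  have hint : ∀ p ∈ S, Integrable (F p) μ := fun p hp => integrable_of_mem_Icc hp (hF p)
  have hanti : Antitone (S.domRestrict fun p => ∫ a, F p a ∂μ) := fun p q hpq =>
    integral_mono (hint q q.2) (hint p p.2) fun a => by
      by_cases h : (q : β) ≤ X a
      · simp [F, h, (show (p : β) ≤ q from hpq).trans h]
      · simp only [F, h, if_false, zero_mul]
        exact (hF p a).1
  refine measurable_of_restrict_of_restrict_compl hS.ordConnected.measurableSet
    hanti.measurable ?_
  have : Sᶜ.domRestrict (fun p => ∫ a, F p a ∂μ) = fun _ => 0 :=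
    funext fun p => integral_non_aestronglyMeasurable p.2
  exact this ▸ measurable_const

end Measurability

section PoissonAdmissions

variable {H : Type*} [Fintype H]

structure IsMeasurableAdmissionsFun (A : AdmissionsFun H) : Prop where
  none_eq_one : ∀ p, A none p = 1
  mem_Icc : ∀ o p, A o p ∈ Icc (0:ℝ) 1
  measurable : ∀ o, Measurable (A o)

lemma Vpois_one (x : ℝ) : Vpois x 1 = Real.exp (-x) := by
  simp [Vpois]

lemma IsMatchingFun.one_sub_sum_mem_Icc {M : MatchingFun H} (hM : IsMatchingFun M)
    (θ : Student H) (s : Finset (Option H)) : 1 - ∑ o ∈ s, M θ o ∈ Icc (0:ℝ) 1 := by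
  have hle : ∑ o ∈ s, M θ o ≤ ∑ o, M θ o :=
    Finset.sum_le_sum_of_subset_of_nonneg (Finset.subset_univ s) fun o _ _ => (hM θ).1 o
  have hnn : 0 ≤ ∑ o ∈ s, M θ o := Finset.sum_nonneg fun o _ => (hM θ).1 o
  constructor <;> linarith [(hM θ).2]

lemma interestOf_nonneg (η : Measure (Student H)) {M : MatchingFun H} (hM : IsMatchingFun M)
    (g : H) (p : unitInterval) : 0 ≤ interestOf η M g p :=
  integral_nonneg fun θ => mul_nonneg (by split_ifs <;> norm_num)
    (hM.one_sub_sum_mem_Icc θ _).1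

lemma measurable_interestOf (η : Measure (Student H)) [IsFiniteMeasure η] {M : MatchingFun H}
    (hM : IsMatchingFun M) (g : H) : Measurable (interestOf η M g) :=
  measurable_integral_ite_le_mul η ((measurable_pi_apply g).comp measurable_snd)
    fun θ => hM.one_sub_sum_mem_Icc θ _

/-- `𝓐(𝓘(M))` for unit capacities and the Poisson vacancy function. -/
def poissonAdmissions (η : Measure (Student H)) (M : MatchingFun H) : AdmissionsFun H :=
  admissionsOf Vpois (fun _ => 1) (interestOf η M)

lemma poissonAdmissions_some (η : Measure (Student H)) (M : MatchingFun H) (g : H)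
    (p : unitInterval) : poissonAdmissions η M (some g) p = Real.exp (-interestOf η M g p) :=
  Vpois_one _

lemma isMeasurableAdmissionsFun_poissonAdmissions (η : Measure (Student H)) [IsFiniteMeasure η]
    {M : MatchingFun H} (hM : IsMatchingFun M) :
    IsMeasurableAdmissionsFun (poissonAdmissions η M) where
  none_eq_one _ := rfl
  mem_Icc
    | none, _ => ⟨zero_le_one, le_rfl⟩
    | some g, p => by
      rw [poissonAdmissions_some]
      exact ⟨(Real.exp_pos _).le, Real.exp_le_one_iff.2 (neg_nonpos.2 (interestOf_nonneg η hM g p))⟩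
  measurable
    | none => measurable_const
    | some g => by
      rw [funext (poissonAdmissions_some η M g)]
      exact (measurable_interestOf η hM g).neg.exp

end PoissonAdmissions

section IIDIntegration

variable {H : Type*} [Fintype H]

lemma setIntegral_Icc_comp_projIcc (f : unitInterval → ℝ) :
    ∫ x in Icc (0:ℝ) 1, f (projIcc 0 1 zero_le_one x) = ∫ t, f t := by
  rw [← unitInterval.measurePreserving_coe.integral_comp unitInterval.measurableEmbedding_coe]
  simp

lemma integral_ite_le_eq_one_sub (p : unitInterval) :
    ∫ t : unitInterval, (if p ≤ t then (1:ℝ) else 0) = 1 - p := by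
  have := integral_indicator_one (μ := volume) (measurableSet_Ici (a := p))
  simp only [Set.indicator_apply, Set.mem_Ici, Pi.one_apply, Measure.real,
    unitInterval.volume_Ici] at this
  rw [this, ENNReal.toReal_ofReal (sub_nonneg.2 p.2.2)]

omit [Fintype H] in
lemma measurableSet_preimage_fst (S : Set (LinearOrder (Option H))) :
    MeasurableSet (Prod.fst ⁻¹' S : Set (Student H)) :=
  measurable_fst MeasurableSpace.measurableSet_top

omit [Fintype H] in
lemma measurableSet_fiber (r : LinearOrder (Option H)) :
    MeasurableSet {θ : Student H | θ.1 = r} :=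
  measurableSet_preimage_fst {r}

lemma integral_eq_sum_setIntegral_fiber {η : Measure (Student H)} {f : Student H → ℝ}
    (hf : Integrable f η) :
    ∫ θ, f θ ∂η = ∑ r, ∫ θ in {θ : Student H | θ.1 = r}, f θ ∂η := by
  rw [← integral_iUnion_fintype measurableSet_fiber
    (fun r r' hrr' => Set.disjoint_left.2 fun θ h h' => hrr' (h.symm.trans h'))
    fun r => hf.integrableOn, Set.iUnion_eq_univ_iff.2 fun θ => ⟨θ.1, rfl⟩, setIntegral_univ]

lemma setIntegral_fiber_prod {η : Measure (Student H)} {r : LinearOrder (Option H)} {c : ℝ≥0∞}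
    (hc : Measure.map priMap (η.restrict {θ : Student H | θ.1 = r}) = c • uniformPriors H)
    (f : H → unitInterval → ℝ) (hf : ∀ g, Measurable (f g)) (S : Finset H) :
    ∫ θ in {θ : Student H | θ.1 = r}, ∏ g ∈ S, f g (θ.2 g) ∂η =
      η.real {θ : Student H | θ.1 = r} * ∏ g ∈ S, ∫ t, f g t := by
  have hpri : Measurable (priMap (H := H)) :=
    measurable_pi_lambda _ fun g => measurable_subtype_coe.comp
      ((measurable_pi_apply g).comp measurable_snd)
  have : IsProbabilityMeasure (volume.restrict (Icc (0:ℝ) 1)) := ⟨by simp⟩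
  have hmass : c = η {θ : Student H | θ.1 = r} := by
    have := congrArg (fun μ => μ univ) hc
    simpa [Measure.map_apply hpri MeasurableSet.univ, uniformPriors] using this.symm
  set F : (H → ℝ) → ℝ := fun x => ∏ g, if g ∈ S then f g (projIcc 0 1 zero_le_one (x g)) else 1
  have hF : Measurable F := Finset.measurable_prod _ fun g _ =>
    Measurable.ite (.const (g ∈ S))
      ((hf g).comp (continuous_projIcc.measurable.comp (measurable_pi_apply g))) measurable_const
  calc ∫ θ in {θ : Student H | θ.1 = r}, ∏ g ∈ S, f g (θ.2 g) ∂η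
      = ∫ θ in {θ : Student H | θ.1 = r}, F (priMap θ) ∂η := by
        simp [F, priMap, Finset.prod_ite_mem]
    _ = c.toReal * ∫ x, F x ∂uniformPriors H := by
        rw [← integral_map hpri.aemeasurable hF.aestronglyMeasurable, hc, integral_smul_measure,
          smul_eq_mul]
    _ = _ := by
        simp only [F, hmass, uniformPriors]
        rw [integral_fintype_prod_eq_prod
          fun g y => if g ∈ S then f g (projIcc 0 1 zero_le_one y) else 1]
        rw [Measure.real]
        congr 1
        refine (Finset.prod_subset_one_on_sdiff (Finset.subset_univ S) (fun g hg => ?_)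
          fun g hg => ?_).symm
        · simp [(Finset.mem_sdiff.1 hg).2]
        · simp [hg, setIntegral_Icc_comp_projIcc]

end IIDIntegration

section Demand

variable {H : Type*} [Fintype H]

def schoolsAbove (r : LinearOrder (Option H)) (h : H) : Finset H :=
  Finset.univ.filter fun g => r.lt (some h) (some g)

/-- The paper's `λ_h`: the mass of students who list `h` and are rejected by every school they
rank above it, when `g` admits a uniformly random priority with probability `∫ t, A (some g) t`. -/
def demand (η : Measure (Student H)) (A : AdmissionsFun H) (h : H) : ℝ :=
  ∑ r, if r.lt none (some h) then
    η.real {θ : Student H | θ.1 = r} * ∏ g ∈ schoolsAbove r h, (1 - ∫ t, A (some g) t) else 0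

lemma rejectedAbove_of_lt (A : AdmissionsFun H) {θ : Student H} {h : H}
    (hθ : θ.1.lt none (some h)) :
    rejectedAbove A θ (some h) = ∏ g ∈ schoolsAbove θ.1 h, (1 - A (some g) (θ.2 g)) := by
  let _ := θ.1
  have : Finset.univ.filter (fun o => Prefers θ o (some h)) =
      (schoolsAbove θ.1 h).map Function.Embedding.some := by
    ext (_ | g)
    · simp only [Finset.mem_map, Function.Embedding.some_apply, reduceCtorEq, and_false,
        exists_false, iff_false]
      exact fun hmem => lt_asymm hθ (mem_filter_prefers.1 hmem)
    · simp only [Finset.mem_map, Function.Embedding.some_apply, Option.some_inj,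
        exists_eq_right, schoolsAbove, Finset.mem_filter, Finset.mem_univ, true_and]
      rfl
  rw [rejectedAbove, this, Finset.prod_map]
  rfl

lemma rejectedAbove_of_not_lt {A : AdmissionsFun H} (hA : ∀ p, A none p = 1) {θ : Student H}
    {h : H} (hθ : ¬ θ.1.lt none (some h)) : rejectedAbove A θ (some h) = 0 := by
  let _ := θ.1
  refine Finset.prod_eq_zero (i := none) ?_ (by simp [priOf, hA])
  exact mem_filter_prefers.2 (lt_of_le_of_ne (not_lt.1 hθ) (Option.some_ne_none h))

lemma measurable_rejectedAbove {A : AdmissionsFun H} (hA : ∀ o, Measurable (A o)) (o : Option H) :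
    Measurable fun θ => rejectedAbove A θ o := by
  simp only [rejectedAbove, Finset.prod_filter]
  refine Finset.measurable_prod _ fun o' _ => Measurable.ite
    (measurableSet_preimage_fst {r | r.lt o o'})
    (measurable_const.sub ((hA o').comp ?_)) measurable_const
  cases o' with
  | none => exact measurable_const
  | some g => exact (measurable_pi_apply g).comp measurable_snd

lemma rejectedAbove_mem_Icc {A : AdmissionsFun H} (hA : ∀ o p, A o p ∈ Icc (0:ℝ) 1)
    (θ : Student H) (o : Option H) : rejectedAbove A θ o ∈ Icc (0:ℝ) 1 :=
  ⟨Finset.prod_nonneg fun o' _ => sub_nonneg.2 (hA o' _).2,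
    Finset.prod_le_one (fun o' _ => sub_nonneg.2 (hA o' _).2)
      fun o' _ => sub_le_self _ (hA o' _).1⟩

lemma integrable_mul_rejectedAbove {η : Measure (Student H)} [IsFiniteMeasure η]
    {A : AdmissionsFun H} (hA : IsMeasurableAdmissionsFun A) {φ : unitInterval → ℝ}
    (hφ : Measurable φ) (hφ01 : ∀ t, φ t ∈ Icc (0:ℝ) 1) (h : H) :
    Integrable (fun θ => φ (θ.2 h) * rejectedAbove A θ (some h)) η :=
  integrable_of_mem_Icc
    ((hφ.comp ((measurable_pi_apply h).comp measurable_snd)).mul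
      (measurable_rejectedAbove hA.measurable _)).aestronglyMeasurable
    fun θ => ⟨mul_nonneg (hφ01 _).1 (rejectedAbove_mem_Icc hA.mem_Icc θ _).1,
      mul_le_one₀ (hφ01 _).2 (rejectedAbove_mem_Icc hA.mem_Icc θ _).1
        (rejectedAbove_mem_Icc hA.mem_Icc θ _).2⟩

lemma setIntegral_fiber_mul_rejectedAbove {η : Measure (Student H)}
    {r : LinearOrder (Option H)} {c : ℝ≥0∞}
    (hc : Measure.map priMap (η.restrict {θ : Student H | θ.1 = r}) = c • uniformPriors H)
    {A : AdmissionsFun H} (hA : IsMeasurableAdmissionsFun A) {φ : unitInterval → ℝ}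
    (hφ : Measurable φ) {h : H} (hr : r.lt none (some h)) :
    ∫ θ in {θ : Student H | θ.1 = r}, φ (θ.2 h) * rejectedAbove A θ (some h) ∂η =
      (∫ t, φ t) * (η.real {θ : Student H | θ.1 = r} *
        ∏ g ∈ schoolsAbove r h, (1 - ∫ t, A (some g) t)) := by
  set f : H → unitInterval → ℝ := Function.update (fun g t => 1 - A (some g) t) h φ
  have hh : h ∉ schoolsAbove r h := by simp [schoolsAbove]
  have hf : ∀ g, Measurable (f g) := fun g => by
    by_cases hg : g = h
    · subst hg; simpa [f] using hφ
    · simp only [f, Function.update_of_ne hg]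
      exact measurable_const.sub (hA.measurable (some g))
  have hfg : ∀ g ∈ schoolsAbove r h, f g = fun t => 1 - A (some g) t := fun g hg =>
    Function.update_of_ne (ne_of_mem_of_not_mem hg hh) _ _
  calc ∫ θ in {θ : Student H | θ.1 = r}, φ (θ.2 h) * rejectedAbove A θ (some h) ∂η
      = ∫ θ in {θ : Student H | θ.1 = r}, ∏ g ∈ insert h (schoolsAbove r h), f g (θ.2 g) ∂η := by
        refine setIntegral_congr_fun (measurableSet_fiber r) fun θ (hθ : θ.1 = r) => ?_
        rw [Finset.prod_insert hh, rejectedAbove_of_lt A (hθ ▸ hr), hθ]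
        exact congrArg₂ _ (by simp [f]) (Finset.prod_congr rfl fun g hg => by rw [hfg g hg])
    _ = _ := by
        rw [setIntegral_fiber_prod hc f hf, Finset.prod_insert hh,
          Finset.prod_congr rfl fun g hg => by rw [hfg g hg, integral_sub (integrable_const 1)
            (integrable_of_mem_Icc (hA.measurable _).aestronglyMeasurable (hA.mem_Icc _))]]
        simp only [f, Function.update_self, integral_const, smul_eq_mul, mul_one, probReal_univ]
        ring

lemma integral_mul_rejectedAbove {η : Measure (Student H)} [IsFiniteMeasure η]
    (hη : ∀ r : LinearOrder (Option H), ∃ c : ℝ≥0∞,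
      Measure.map priMap (η.restrict {θ : Student H | θ.1 = r}) = c • uniformPriors H)
    {A : AdmissionsFun H} (hA : IsMeasurableAdmissionsFun A) {φ : unitInterval → ℝ}
    (hφ : Measurable φ) (hφ01 : ∀ t, φ t ∈ Icc (0:ℝ) 1) (h : H) :
    ∫ θ, φ (θ.2 h) * rejectedAbove A θ (some h) ∂η = (∫ t, φ t) * demand η A h := by
  rw [integral_eq_sum_setIntegral_fiber (integrable_mul_rejectedAbove hA hφ hφ01 h), demand,
    Finset.mul_sum]
  refine Finset.sum_congr rfl fun r _ => ?_
  split_ifs with hr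
  · exact setIntegral_fiber_mul_rejectedAbove (hη r).choose_spec hA hφ hr
  · rw [mul_zero]
    refine setIntegral_eq_zero_of_forall_eq_zero fun θ (hθ : θ.1 = r) => ?_
    rw [rejectedAbove_of_not_lt hA.none_eq_one (hθ ▸ hr), mul_zero]

end Demand

section DemandBound

variable {H : Type*} [Fintype H] {η : Measure (Student H)}

lemma card_schoolsAbove (r : LinearOrder (Option H)) (h : H) :
    (schoolsAbove r h).card = aboveCount (r.comap some (Option.some_injective H)) h := by
  simp only [schoolsAbove, aboveCount, LinearOrder.comap_lt]

omit [Fintype H] in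
lemma measureReal_preimage_fst [IsFiniteMeasure η] (P : Finset (LinearOrder (Option H))) :
    η.real (Prod.fst ⁻¹' (P : Set (LinearOrder (Option H)))) =
      ∑ r ∈ P, η.real {θ : Student H | θ.1 = r} :=
  (sum_measureReal_preimage_singleton P fun r _ => measurableSet_fiber r).symm

lemma demand_le_sum (A : AdmissionsFun H) {x : ℝ} (hx : 0 ≤ x)
    (hq : ∀ g, 1 - ∫ t, A (some g) t ∈ Icc 0 x) (h : H) :
    demand η A h ≤ ∑ r, η.real {θ : Student H | θ.1 = r} *
      x ^ aboveCount (r.comap some (Option.some_injective H)) h := by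
  refine Finset.sum_le_sum fun r _ => ?_
  split_ifs
  · rw [← card_schoolsAbove, ← Finset.prod_const]
    exact mul_le_mul_of_nonneg_left
      (Finset.prod_le_prod (fun g _ => (hq g).1) fun g _ => (hq g).2) measureReal_nonneg
  · positivity

/-- Each school sits equally often at each position, so the demand for a school is at most that
of a school whose competitors above it each reject with probability `x`. -/
lemma card_mul_demand_le [IsFiniteMeasure η]
    (hη : ∀ s t : LinearOrder H,
      η {θ : Student H | RestrictsTo θ.1 s} = η {θ : Student H | RestrictsTo θ.1 t})
    (A : AdmissionsFun H) {x : ℝ} (hx : 0 ≤ x) (hq : ∀ g, 1 - ∫ t, A (some g) t ∈ Icc 0 x)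
    (h : H) :
    Fintype.card H * demand η A h ≤
      η.real univ * ∑ i ∈ Finset.range (Fintype.card H), x ^ i := by
  set π : LinearOrder (Option H) → LinearOrder H := fun r => r.comap some (Option.some_injective H)
  have hfiber : ∀ s, η.real {θ : Student H | RestrictsTo θ.1 s} =
      ∑ r ∈ Finset.univ.filter (π · = s), η.real {θ : Student H | θ.1 = r} := fun s => by
    rw [← measureReal_preimage_fst]
    congr 1
    ext θ
    simp [restrictsTo_iff, π]
  obtain ⟨w, hw⟩ : ∃ w, ∀ s, η.real {θ : Student H | RestrictsTo θ.1 s} = w :=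
    ⟨_, fun s => congrArg ENNReal.toReal
      (hη s (LinearOrder.lift' _ (Fintype.equivFin H).injective))⟩
  have htotal : η.real univ = Fintype.card (LinearOrder H) * w := by
    rw [← Set.preimage_univ (f := Prod.fst), ← Finset.coe_univ, measureReal_preimage_fst,
      ← Finset.sum_fiberwise Finset.univ π]
    simp [← hfiber, hw]
  have hregroup : ∑ r, η.real {θ : Student H | θ.1 = r} * x ^ aboveCount (π r) h =
      w * ∑ s, x ^ aboveCount s h := by
    rw [← Finset.sum_fiberwise Finset.univ π, Finset.mul_sum]
    refine Finset.sum_congr rfl fun s _ => ?_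
    rw [Finset.sum_congr rfl fun r hr => by rw [(Finset.mem_filter.1 hr).2], ← Finset.sum_mul,
      ← hfiber, hw]
  calc Fintype.card H * demand η A h
      ≤ Fintype.card H * (w * ∑ s, x ^ aboveCount s h) := by
        rw [← hregroup]
        exact mul_le_mul_of_nonneg_left (demand_le_sum A hx hq h) (Nat.cast_nonneg _)
    _ = _ := by
        rw [htotal, mul_left_comm, card_mul_sum_pow_aboveCount]
        ring

end DemandBound

section MeanAdmission

open intervalIntegral

/-- The mean over a uniform priority of the Poisson admission chance `exp (-(1 - t) λ)`. -/
def meanAdmission (lam : ℝ) : ℝ := ∫ x in (0:ℝ)..1, Real.exp (-(lam * x))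

lemma integral_exp_neg_one_sub_mul (lam : ℝ) :
    ∫ t : unitInterval, Real.exp (-((1 - (t : ℝ)) * lam)) = meanAdmission lam := by
  rw [unitInterval.measurePreserving_coe.integral_comp unitInterval.measurableEmbedding_coe
      fun x => Real.exp (-((1 - x) * lam)),
    integral_Icc_eq_integral_Ioc, ← integral_of_le zero_le_one, meanAdmission]
  simp only [mul_comm _ lam]
  rw [integral_comp_sub_left (fun x => Real.exp (-(lam * x))) 1, sub_self, sub_zero]

lemma mul_meanAdmission (lam : ℝ) : lam * meanAdmission lam = 1 - Real.exp (-lam) := by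
  rw [meanAdmission, ← smul_eq_mul, smul_integral_comp_mul_left (f := fun x => Real.exp (-x)),
    integral_comp_neg, integral_exp]
  simp

lemma meanAdmission_antitone : Antitone meanAdmission := fun lam lam' h =>
  integral_mono_on zero_le_one (Continuous.intervalIntegrable (by fun_prop) _ _)
    (Continuous.intervalIntegrable (by fun_prop) _ _) fun x hx =>
    Real.exp_le_exp.2 (neg_le_neg (mul_le_mul_of_nonneg_right h hx.1))

lemma meanAdmission_nonneg (lam : ℝ) : 0 ≤ meanAdmission lam :=
  integral_nonneg zero_le_one fun _ _ => (Real.exp_pos _).le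

lemma meanAdmission_le_one {lam : ℝ} (hlam : 0 ≤ lam) : meanAdmission lam ≤ 1 := by
  simpa [meanAdmission] using meanAdmission_antitone hlam

variable {ρ : ℝ}

lemma neg_log_one_sub_pos (hρ0 : 0 < ρ) (hρ1 : ρ < 1) : 0 < -Real.log (1 - ρ) :=
  neg_pos.2 (Real.log_neg (by linarith) (by linarith))

lemma div_le_meanAdmission (hρ0 : 0 < ρ) (hρ1 : ρ < 1) {lam : ℝ} (hlam : lam ≤ -Real.log (1 - ρ)) :
    ρ / -Real.log (1 - ρ) ≤ meanAdmission lam := by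
  have hℓ := neg_log_one_sub_pos hρ0 hρ1
  have h := mul_meanAdmission (-Real.log (1 - ρ))
  rw [neg_neg, Real.exp_log (by linarith), sub_sub_cancel] at h
  have hval : meanAdmission (-Real.log (1 - ρ)) = ρ / -Real.log (1 - ρ) := by
    rw [eq_div_iff hℓ.ne', mul_comm, h]
  exact hval ▸ meanAdmission_antitone hlam

lemma le_neg_log_one_sub (hρ0 : 0 < ρ) (hρ1 : ρ < 1) {lam μ : ℝ} (hμ : μ * meanAdmission μ ≤ ρ)
    (hlam : lam * meanAdmission μ ≤ ρ) : lam ≤ -Real.log (1 - ρ) := by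
  have hℓ := neg_log_one_sub_pos hρ0 hρ1
  have hμℓ : μ ≤ -Real.log (1 - ρ) := by
    rw [mul_meanAdmission] at hμ
    rw [le_neg, ← Real.exp_le_exp, Real.exp_log (by linarith)]
    linarith
  have hq := div_le_meanAdmission hρ0 hρ1 hμℓ
  have hqpos : 0 < meanAdmission μ := lt_of_lt_of_le (by positivity) hq
  calc lam ≤ ρ / meanAdmission μ := (le_div_iff₀ hqpos).2 hlam
    _ ≤ ρ / (ρ / -Real.log (1 - ρ)) := div_le_div_of_nonneg_left hρ0.le (by positivity) hq
    _ = -Real.log (1 - ρ) := by field_simp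

end MeanAdmission

section StableIID

variable {H : Type*} [Fintype H] {η : Measure (Student H)} [IsFiniteMeasure η]
  {M : MatchingFun H}

omit [IsFiniteMeasure η] in
lemma StableMatching.apply_eq (hM : StableMatching η Vpois (fun _ => 1) M) (θ : Student H)
    (o : Option H) : M θ o = matchingOf (poissonAdmissions η M) θ o :=
  congrFun (congrFun hM.2 θ) o

lemma interestOf_eq_mul_demand (hη : IsSymmetricIID η)
    (hM : StableMatching η Vpois (fun _ => 1) M) (h : H) (p : unitInterval) :
    interestOf η M h p = (1 - p) * demand η (poissonAdmissions η M) h := by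
  have hφ : Measurable fun t : unitInterval => if p ≤ t then (1:ℝ) else 0 :=
    Measurable.ite measurableSet_Ici measurable_const measurable_const
  rw [← integral_ite_le_eq_one_sub p, ← integral_mul_rejectedAbove hη.2
    (isMeasurableAdmissionsFun_poissonAdmissions η hM.1) hφ (fun t => by split_ifs <;> simp) h,
    interestOf]
  congr 1 with θ
  rw [rejectedAbove_eq]
  congr 3 with o
  exact hM.apply_eq θ o

lemma demand_nonneg (hη : IsSymmetricIID η) (hM : StableMatching η Vpois (fun _ => 1) M)
    (h : H) : 0 ≤ demand η (poissonAdmissions η M) h := by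
  simpa [interestOf_eq_mul_demand hη hM] using interestOf_nonneg η hM.1 h 0

lemma integral_poissonAdmissions (hη : IsSymmetricIID η)
    (hM : StableMatching η Vpois (fun _ => 1) M) (h : H) :
    ∫ t, poissonAdmissions η M (some h) t = meanAdmission (demand η (poissonAdmissions η M) h) := by
  simp only [poissonAdmissions_some, interestOf_eq_mul_demand hη hM]
  exact integral_exp_neg_one_sub_mul _

lemma demand_mul_meanAdmission_le (hη : IsSymmetricIID η)
    (hM : StableMatching η Vpois (fun _ => 1) M) {ρ : ℝ}
    (hmass : η.real univ = Fintype.card H * ρ) (hρ : 0 ≤ ρ) {h₀ : H}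
    (hmin : ∀ g, meanAdmission (demand η (poissonAdmissions η M) h₀) ≤
      meanAdmission (demand η (poissonAdmissions η M) g)) (h : H) :
    demand η (poissonAdmissions η M) h * meanAdmission (demand η (poissonAdmissions η M) h₀)
      ≤ ρ := by
  set A := poissonAdmissions η M
  set x := 1 - meanAdmission (demand η A h₀)
  have hq : ∀ g, 1 - ∫ t, A (some g) t ∈ Icc 0 x := fun g => by
    rw [integral_poissonAdmissions hη hM]
    exact ⟨sub_nonneg.2 (meanAdmission_le_one (demand_nonneg hη hM g)), by linarith [hmin g]⟩
  have hx : 0 ≤ x := sub_nonneg.2 (meanAdmission_le_one (demand_nonneg hη hM h₀))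
  have hcard : (0:ℝ) < Fintype.card H := Nat.cast_pos.2 (Fintype.card_pos_iff.2 ⟨h⟩)
  have hdemand : demand η A h ≤ ρ * ∑ i ∈ Finset.range (Fintype.card H), x ^ i := by
    have := card_mul_demand_le hη.1 A hx hq h
    rw [hmass, mul_assoc] at this
    exact le_of_mul_le_mul_left this hcard
  have hgeom := geom_sum_mul x (Fintype.card H)
  calc demand η A h * meanAdmission (demand η A h₀) = demand η A h * (1 - x) := by
        rw [sub_sub_cancel]
    _ ≤ ρ * (∑ i ∈ Finset.range (Fintype.card H), x ^ i) * (1 - x) :=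
        mul_le_mul_of_nonneg_right hdemand (by rw [sub_sub_cancel]; exact meanAdmission_nonneg _)
    _ = ρ * (1 - x ^ Fintype.card H) := by linear_combination -ρ * hgeom
    _ ≤ ρ := by nlinarith [pow_nonneg hx (Fintype.card H)]

lemma div_le_meanAdmission_demand (hη : IsSymmetricIID η)
    (hM : StableMatching η Vpois (fun _ => 1) M) {ρ : ℝ}
    (hmass : η.real univ = Fintype.card H * ρ) (hρ0 : 0 < ρ) (hρ1 : ρ < 1) (h : H) :
    ρ / -Real.log (1 - ρ) ≤ meanAdmission (demand η (poissonAdmissions η M) h) := by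
  obtain ⟨h₀, -, hmin⟩ := Finset.exists_min_image Finset.univ
    (fun g => meanAdmission (demand η (poissonAdmissions η M) g)) ⟨h, Finset.mem_univ h⟩
  have hbound := demand_mul_meanAdmission_le hη hM hmass hρ0.le fun g => hmin g (Finset.mem_univ g)
  exact div_le_meanAdmission hρ0 hρ1 (le_neg_log_one_sub hρ0 hρ1 (hbound h₀) (hbound h))

lemma integral_sum_matching_mul_rankOf_le (hη : IsSymmetricIID η)
    (hM : StableMatching η Vpois (fun _ => 1) M) :
    ∫ θ, ∑ h, M θ (some h) * (rankOf θ h : ℝ) ∂η ≤ ∑ h, demand η (poissonAdmissions η M) h := by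
  have hA := isMeasurableAdmissionsFun_poissonAdmissions η hM.1
  have hreject : ∀ h, ∫ θ, rejectedAbove (poissonAdmissions η M) θ (some h) ∂η =
      demand η (poissonAdmissions η M) h := fun h => by
    simpa using integral_mul_rejectedAbove hη.2 hA measurable_const
      (fun _ => ⟨zero_le_one, le_rfl⟩) h
  have hint : ∀ h, Integrable (fun θ => rejectedAbove (poissonAdmissions η M) θ (some h)) η :=
    fun h => by
      simpa using integrable_mul_rejectedAbove (φ := fun _ => 1) hA measurable_const
        (fun _ => ⟨zero_le_one, le_rfl⟩) h
  rw [← Finset.sum_congr rfl fun h _ => hreject h, ← integral_finsetSum _ fun h _ => hint h]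
  refine integral_mono_of_nonneg (ae_of_all _ fun θ => Finset.sum_nonneg fun h _ =>
    mul_nonneg ((hM.1 θ).1 _) (Nat.cast_nonneg _)) (integrable_finsetSum _ fun h _ => hint h)
    (ae_of_all _ fun θ => ?_)
  simp only [hM.apply_eq θ]
  exact sum_matchingOf_mul_rankOf_le _ hA.none_eq_one (fun o p => (hA.mem_Icc o p).2) θ

lemma integral_sum_matching (hη : IsSymmetricIID η)
    (hM : StableMatching η Vpois (fun _ => 1) M) :
    ∫ θ, ∑ h, M θ (some h) ∂η = ∑ h, meanAdmission (demand η (poissonAdmissions η M) h) *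
      demand η (poissonAdmissions η M) h := by
  have hA := isMeasurableAdmissionsFun_poissonAdmissions η hM.1
  simp only [hM.apply_eq _ (some _)]
  rw [integral_finsetSum _ fun h _ => by
    exact integrable_mul_rejectedAbove hA (hA.measurable _) (hA.mem_Icc _) h]
  refine Finset.sum_congr rfl fun h _ => ?_
  rw [← integral_poissonAdmissions hη hM h, ← integral_mul_rejectedAbove hη.2 hA (hA.measurable _)
    (hA.mem_Icc _) h]
  rfl

theorem averageRank_le_of_stableMatching (hη : IsSymmetricIID η)
    (hM : StableMatching η Vpois (fun _ => 1) M) {ρ : ℝ}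
    (hmass : η.real univ = Fintype.card H * ρ) (hρ0 : 0 < ρ) (hρ1 : ρ < 1) :
    averageRank η M ≤ -Real.log (1 - ρ) / ρ := by
  have hℓ := neg_log_one_sub_pos hρ0 hρ1
  refine div_le_of_le_mul₀ (integral_nonneg fun θ => Finset.sum_nonneg fun h _ => (hM.1 θ).1 _)
    (by positivity) ?_
  rw [integral_sum_matching hη hM, Finset.mul_sum]
  refine (integral_sum_matching_mul_rankOf_le hη hM).trans (Finset.sum_le_sum fun h _ => ?_)
  have hq := div_le_meanAdmission_demand hη hM hmass hρ0 hρ1 h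
  have hone : 1 ≤ -Real.log (1 - ρ) / ρ * meanAdmission (demand η (poissonAdmissions η M) h) :=
    calc (1:ℝ) = -Real.log (1 - ρ) / ρ * (ρ / -Real.log (1 - ρ)) := by
          rw [div_mul_div_comm, mul_comm ρ, div_self (mul_pos hℓ hρ0).ne']
      _ ≤ _ := by gcongr
  rw [← mul_assoc]
  exact le_mul_of_one_le_left (demand_nonneg hη hM h) hone

end StableIID

theorem stmt14_general {H : Type*} [Fintype H] (η : Measure (Student H))
    [IsFiniteMeasure η] (hη : IsSymmetricIID η) (n k : ℕ) (hn : 0 < n) (hk : 0 < k)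
    (hmass : (η Set.univ).toReal = (Fintype.card H : ℝ) * ((n : ℝ) / ((n : ℝ) + (k : ℝ))))
    (M : MatchingFun H) (hM : StableMatching η Vpois (fun _ => 1) M) :
    averageRank η M ≤ (((n : ℝ) + (k : ℝ)) / (n : ℝ)) * Real.log (((n : ℝ) + (k : ℝ)) / (k : ℝ)) := by
  have hn' : (0:ℝ) < n := Nat.cast_pos.2 hn
  have hk' : (0:ℝ) < k := Nat.cast_pos.2 hk
  have hρ1 : (n : ℝ) / (n + k) < 1 := (div_lt_one (by positivity)).2 (by linarith)
  have hrhs : -Real.log (1 - n / (n + k)) / (n / (n + k)) =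
      (n + k) / n * Real.log ((n + k) / k) := by
    rw [show (1:ℝ) - n / (n + k) = (((n:ℝ) + k) / k)⁻¹ by field_simp; ring]
    rw [Real.log_inv, neg_neg]
    field_simp
  exact hrhs ▸ averageRank_le_of_stableMatching hη hM hmass (by positivity) hρ1

/-- In a symmetric IID market where every school has a single seat and the
ratio of students to schools is `ρ = n/(n+k) < 1`, the unique `(η^IID, V^pois)`-stable matching
`M` satisfies `AverageRank(M) ≤ ((n+k)/n)·log((n+k)/k)`. -/
theorem stmt14 {H : Type*} [Fintype H] [Nonempty H] (η : Measure (Student H))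
    [IsFiniteMeasure η] (hη : IsSymmetricIID η) (n k : ℕ) (hn : 0 < n) (hk : 0 < k)
    (hmass : (η Set.univ).toReal = (Fintype.card H : ℝ) * ((n : ℝ) / ((n : ℝ) + (k : ℝ))))
    (M : MatchingFun H) (hM : StableMatching η Vpois (fun _ => 1) M) :
    averageRank η M ≤ (((n : ℝ) + (k : ℝ)) / (n : ℝ)) * Real.log (((n : ℝ) + (k : ℝ)) / (k : ℝ)) :=
  stmt14_general η hη n k hn hk hmass M hM
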